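/- A unique-sink orientation of the n-cube is locally up-uniform if and only if it is 2-up-uniform. -/
import Mathlib


/-- Flip coordinate `i` of a cube vertex. -/
def cflip {n : ℕ} (v : Fin n → Bool) (i : Fin n) : Fin n → Bool :=
  fun j => if j = i then !v j else v j

/-- `Φ v i = true` means the edge between `v` and `v ⊕ i` is incoming at `v` (sign `+`);
`Φ v i = false` means it is outgoing at `v` (sign `-`). Consistency says the two
endpoints of an edge agree about its direction. -/
def Consistent {n : ℕ} (Φ : (Fin n → Bool) → Fin n → Bool) : Prop :=
  ∀ v i, Φ (cflip v i) i ≠ Φ v i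

/-- `w` lies in the subcube spanned from `u` by the coordinate set `C`. -/
def InSubcube {n : ℕ} (u : Fin n → Bool) (C : Finset (Fin n)) (w : Fin n → Bool) : Prop :=
  ∀ j ∉ C, w j = u j

/-- Every (nonempty) subcube has a unique sink. -/
def HasUniqueSinks {n : ℕ} (Φ : (Fin n → Bool) → Fin n → Bool) : Prop :=
  ∀ (u : Fin n → Bool) (C : Finset (Fin n)),
    ∃! w, InSubcube u C w ∧ ∀ i ∈ C, Φ w i = true

/-- A unique-sink orientation of the `n`-cube. -/
def IsUSO {n : ℕ} (Φ : (Fin n → Bool) → Fin n → Bool) : Prop :=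
  Consistent Φ ∧ HasUniqueSinks Φ

/-- Directed edge relation of the orientation: `v → u`. -/
def Step {n : ℕ} (Φ : (Fin n → Bool) → Fin n → Bool) (v u : Fin n → Bool) : Prop :=
  ∃ i, Φ v i = false ∧ u = cflip v i

/-- `Φ` is 2-up-uniform: whenever `u` has `u i = u j = 0` (`i ≠ j`) and `u` is
the source of the 2-dimensional subcube spanned by coordinates `i, j`
(both edges at `u` outgoing), that subcube is uniformly oriented, i.e. its two
upper edges are also directed from the `0`-side to the `1`-side. -/
def TwoUpUniform {n : ℕ} (Φ : (Fin n → Bool) → Fin n → Bool) : Prop :=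
  ∀ (u : Fin n → Bool) (i j : Fin n), i ≠ j →
    u i = false → u j = false →
    Φ u i = false → Φ u j = false →
    Φ (cflip u i) j = false ∧ Φ (cflip u j) i = false

/-- The orientation obtained from `Φ` by reversing all edges. -/
def reverseAll {n : ℕ} (Φ : (Fin n → Bool) → Fin n → Bool) :
    (Fin n → Bool) → Fin n → Bool :=
  fun v i => !(Φ v i)

/-- `Φ` is 2-uniform: both `Φ` and its total reversal are 2-up-uniform. -/
def TwoUniform {n : ℕ} (Φ : (Fin n → Bool) → Fin n → Bool) : Prop :=
  TwoUpUniform Φ ∧ TwoUpUniform (reverseAll Φ)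

/-- `Φ` is locally up-uniform: for every vertex `u` and set `J` of coordinates
with `u j = 0` and the edge at `u` in coordinate `j` outgoing for all `j ∈ J`,
the subcube spanned from `u` by `J` is uniformly oriented (every edge is
directed from the vertex with fewer ones to the vertex with more ones). -/
def LocallyUpUniform {n : ℕ} (Φ : (Fin n → Bool) → Fin n → Bool) : Prop :=
  ∀ (u : Fin n → Bool) (J : Finset (Fin n)),
    (∀ j ∈ J, u j = false) → (∀ j ∈ J, Φ u j = false) →
    ∀ w, InSubcube u J w → ∀ j ∈ J, w j = false → Φ w j = false


lemma cflip_cflip {n : ℕ} (v : Fin n → Bool) (i : Fin n) : cflip (cflip v i) i = v := by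
  funext j
  by_cases h : j = i <;> simp [cflip, h]

lemma twoUp_aux {n : ℕ} (Φ : (Fin n → Bool) → Fin n → Bool) (h2 : TwoUpUniform Φ) :
    ∀ (k : ℕ) (u : Fin n → Bool) (J : Finset (Fin n)),
      (∀ j ∈ J, u j = false) → (∀ j ∈ J, Φ u j = false) →
      ∀ w, InSubcube u J w → (J.filter (fun i => w i = true)).card = k →
      ∀ j ∈ J, w j = false → Φ w j = false := by
  intro k
  induction k with
  | zero =>
    intro u J hu hΦ w hw hcard j hj hwj
    have hwu : w = u := by
      funext x
      by_cases hx : x ∈ J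
      · have : x ∉ J.filter (fun i => w i = true) := by
          rw [Finset.card_eq_zero.mp hcard]; simp
        simp only [Finset.mem_filter, hx, true_and] at this
        rw [hu x hx]
        exact Bool.eq_false_iff.mpr (fun h => this (by rw [h]))
      · exact hw x hx
    rw [hwu]; exact hΦ j hj
  | succ k ih =>
    intro u J hu hΦ w hw hcard j hj hwj
    have hne : (J.filter (fun i => w i = true)).Nonempty := by
      rw [← Finset.card_pos, hcard]; omega
    obtain ⟨i, hi⟩ := hne
    simp only [Finset.mem_filter] at hi
    obtain ⟨hiJ, hwi⟩ := hi
    have hij : i ≠ j := fun h => by rw [h, hwj] at hwi; exact Bool.false_ne_true hwi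
    set v := cflip w i with hv
    have hvsub : InSubcube u J v := by
      intro x hx
      have hxi : x ≠ i := fun h => hx (h ▸ hiJ)
      simp only [hv, cflip, hxi, if_false]
      exact hw x hx
    have hvi : v i = false := by simp [hv, cflip, hwi]
    have hvj : v j = false := by
      simp only [hv, cflip]
      rw [if_neg (Ne.symm hij)]
      exact hwj
    have hfilter : J.filter (fun x => v x = true) = (J.filter (fun x => w x = true)).erase i := by
      ext x
      simp only [Finset.mem_erase, Finset.mem_filter]
      constructor
      · rintro ⟨hxJ, hvx⟩
        have hxi : x ≠ i := fun h => by rw [h, hvi] at hvx; exact Bool.false_ne_true hvx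
        refine ⟨hxi, hxJ, ?_⟩
        simpa [hv, cflip, hxi] using hvx
      · rintro ⟨hxi, hxJ, hwx⟩
        exact ⟨hxJ, by simpa [hv, cflip, hxi] using hwx⟩
    have hcard' : (J.filter (fun x => v x = true)).card = k := by
      rw [hfilter, Finset.card_erase_of_mem (Finset.mem_filter.mpr ⟨hiJ, hwi⟩), hcard]; omega
    have hΦvi : Φ v i = false := ih u J hu hΦ v hvsub hcard' i hiJ hvi
    have hΦvj : Φ v j = false := ih u J hu hΦ v hvsub hcard' j hj hvj
    have := (h2 v i j hij hvi hvj hΦvi hΦvj).1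
    rwa [hv, cflip_cflip] at this

/-- a USO of the `n`-cube is locally up-uniform iff it is
2-up-uniform. -/
theorem locallyUpUniform_iff_twoUpUniform {n : ℕ}
    (Φ : (Fin n → Bool) → Fin n → Bool) (huso : IsUSO Φ) :
    LocallyUpUniform Φ ↔ TwoUpUniform Φ := by
  constructor
  · intro hloc u i j hij hui huj hΦi hΦj
    have hu : ∀ k ∈ ({i, j} : Finset (Fin n)), u k = false := by
      intro k hk; rcases Finset.mem_insert.mp hk with h | h
      · exact h ▸ hui
      · exact (Finset.mem_singleton.mp h) ▸ huj
    have hΦ : ∀ k ∈ ({i, j} : Finset (Fin n)), Φ u k = false := by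
      intro k hk; rcases Finset.mem_insert.mp hk with h | h
      · exact h ▸ hΦi
      · exact (Finset.mem_singleton.mp h) ▸ hΦj
    constructor
    · refine hloc u {i, j} hu hΦ (cflip u i) ?_ j (by simp) ?_
      · intro x hx
        simp only [Finset.mem_insert, Finset.mem_singleton, not_or] at hx
        simp [cflip, hx.1]
      · simp [cflip, Ne.symm hij, huj]
    · refine hloc u {i, j} hu hΦ (cflip u j) ?_ i (by simp) ?_
      · intro x hx
        simp only [Finset.mem_insert, Finset.mem_singleton, not_or] at hx
        simp [cflip, hx.2]
      · simp [cflip, hij, hui]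
  · intro h2 u J hu hΦ w hw j hj hwj
    exact twoUp_aux Φ h2 _ u J hu hΦ w hw rfl j hj hwj
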